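/- arXiv:math/0505407 — 10 statements merged into one kernel-verified Lean document; each statement's English description precedes it below -/
import Mathlib

section
/- Let E be a complex vector space and a, b : E → E be ℂ-linear endomorphisms satisfying the commutation relation a∘b − b∘a = b∘b. Then the subset A(E) := {x ∈ E : for every p ∈ ℕ there exists n ∈ ℕ with aⁿ(bᵖ(x)) = 0} is a linear subspace of E that is invariant under both a and b; that is, if x ∈ A(E) then a(x) ∈ A(E) and b(x) ∈ A(E). -/
private lemma pow_ann_mono {E : Type*} [AddCommGroup E] [Module ℂ E]
    (a : E →ₗ[ℂ] E) {n m : ℕ} (h : n ≤ m) {y : E} (hy : (a ^ n) y = 0) :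
    (a ^ m) y = 0 := by
  obtain ⟨k, rfl⟩ := Nat.exists_eq_add_of_le h
  rw [add_comm, pow_add, Module.End.mul_apply, hy, map_zero]

/-- Let `E` be a complex vector space and `a, b : E → E` be `ℂ`-linear
endomorphisms satisfying `a∘b − b∘a = b∘b`. Then
`A(E) := {x ∈ E : ∀ p ∈ ℕ, ∃ n ∈ ℕ, aⁿ(bᵖ(x)) = 0}` is a linear subspace of `E`
that is invariant under both `a` and `b`. -/
theorem Aset_is_submodule_and_invariant
    (E : Type*) [AddCommGroup E] [Module ℂ E] (a b : E →ₗ[ℂ] E)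
    (hcomm : a ∘ₗ b - b ∘ₗ a = b ∘ₗ b)
    (A : Set E) (hA : A = {x : E | ∀ p : ℕ, ∃ n : ℕ, (a ^ n) ((b ^ p) x) = 0}) :
    (0 : E) ∈ A ∧
    (∀ x ∈ A, ∀ y ∈ A, x + y ∈ A) ∧
    (∀ (c : ℂ), ∀ x ∈ A, c • x ∈ A) ∧
    (∀ x ∈ A, a x ∈ A) ∧
    (∀ x ∈ A, b x ∈ A) := by
  subst hA
  have hba : ∀ x : E, b (a x) = a (b x) - b (b x) := by
    intro x
    have h := congrArg (fun f : E →ₗ[ℂ] E => f x) hcomm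
    simp only [LinearMap.sub_apply, LinearMap.comp_apply] at h
    rw [sub_eq_iff_eq_add] at h
    rw [h]; abel
  -- key commutation: b^p (a x) = a (b^p x) - p • b^(p+1) x
  have key : ∀ (p : ℕ) (x : E),
      (b ^ p) (a x) = a ((b ^ p) x) - (p : ℂ) • (b ^ (p + 1)) x := by
    intro p
    induction p with
    | zero => intro x; simp
    | succ p ih =>
      intro x
      have h1 : (b ^ (p + 1)) (a x) = (b ^ p) (b (a x)) := by
        rw [pow_succ, Module.End.mul_apply]
      rw [h1, hba x, map_sub, ih (b x)]
      have h2 : (b ^ (p + 1)) (b x) = (b ^ (p + 2)) x := by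
        rw [show p + 2 = p + 1 + 1 from rfl, pow_succ b (p + 1), Module.End.mul_apply]
      have h3 : (b ^ p) (b (b x)) = (b ^ (p + 2)) x := by
        rw [show p + 2 = p + 1 + 1 from rfl, pow_succ b (p + 1), pow_succ b p]
        simp [Module.End.mul_apply]
      have h4 : (b ^ p) (b x) = (b ^ (p + 1)) x := by
        rw [pow_succ, Module.End.mul_apply]
      rw [h2, h3, h4]
      push_cast
      module
  refine ⟨?_, ?_, ?_, ?_, ?_⟩
  · intro p; exact ⟨0, by simp⟩
  · intro x hx y hy p
    obtain ⟨n, hn⟩ := hx p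
    obtain ⟨m, hm⟩ := hy p
    refine ⟨max n m, ?_⟩
    rw [map_add, map_add,
      pow_ann_mono a (le_max_left n m) hn,
      pow_ann_mono a (le_max_right n m) hm, add_zero]
  · intro c x hx p
    obtain ⟨n, hn⟩ := hx p
    exact ⟨n, by rw [map_smul, map_smul, hn, smul_zero]⟩
  · intro x hx p
    obtain ⟨n, hn⟩ := hx p
    obtain ⟨m, hm⟩ := hx (p + 1)
    refine ⟨max n m, ?_⟩
    rw [key p x, map_sub, map_smul]
    have h1 : (a ^ max n m) (a ((b ^ p) x)) = 0 := by
      have h5 : (a ^ max n m) (a ((b ^ p) x)) = (a ^ (max n m + 1)) ((b ^ p) x) := by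
        rw [pow_succ, Module.End.mul_apply]
      rw [h5]
      exact pow_ann_mono a (le_trans (le_max_left n m) (Nat.le_succ _)) hn
    rw [h1, pow_ann_mono a (le_max_right n m) hm, smul_zero, sub_zero]
  · intro x hx p
    obtain ⟨n, hn⟩ := hx (p + 1)
    refine ⟨n, ?_⟩
    have : (b ^ p) (b x) = (b ^ (p + 1)) x := by
      rw [pow_succ, Module.End.mul_apply]
    rw [this, hn]
end

section
/- Let E be a complex vector space and a, b : E → E be ℂ-linear endomorphisms satisfying a∘b − b∘a = b∘b. If b is injective, then A(E) = {0}, where A(E) := {x ∈ E : for every p ∈ ℕ there exists n ∈ ℕ with aⁿ(bᵖ(x)) = 0}. -/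
/-- Let `E` be a complex vector space and `a, b : E → E` be `ℂ`-linear
endomorphisms satisfying `a∘b − b∘a = b∘b`. If `b` is injective, then `A(E) = {0}`,
where `A(E) := {x ∈ E : ∀ p ∈ ℕ, ∃ n ∈ ℕ, aⁿ(bᵖ(x)) = 0}`. -/
theorem Aset_eq_zero_of_injective
    (E : Type*) [AddCommGroup E] [Module ℂ E] (a b : E →ₗ[ℂ] E)
    (hcomm : a ∘ₗ b - b ∘ₗ a = b ∘ₗ b)
    (hb : Function.Injective b) :
    {x : E | ∀ p : ℕ, ∃ n : ℕ, (a ^ n) ((b ^ p) x) = 0} = {(0 : E)} := by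
  -- pointwise form of the commutation relation
  have hab : ∀ z : E, a (b z) = b (a z) + b (b z) := by
    intro z
    have h := congrArg (fun f : E →ₗ[ℂ] E => f z) hcomm
    simp only [LinearMap.sub_apply, LinearMap.comp_apply] at h
    linear_combination (norm := abel) h
  -- key identity: a ∘ bᵖ = bᵖ ∘ a + p • bᵖ⁺¹
  have key : ∀ (p : ℕ) (z : E), a ((b ^ p) z) = (b ^ p) (a z) + p • (b ^ (p + 1)) z := by
    intro p
    induction p with
    | zero => intro z; simp
    | succ p ih =>
      intro z
      have h4 : (b ^ (p + 1)) (b z) = (b ^ p) (b (b z)) := by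
        rw [pow_succ, Module.End.mul_apply]
      simp only [pow_succ, Module.End.mul_apply]
      rw [ih (b z), hab z, map_add, h4, succ_nsmul]
      abel
  -- monotonicity of vanishing under powers of a
  have mono : ∀ (z : E) (k m : ℕ), k ≤ m → (a ^ k) z = 0 → (a ^ m) z = 0 := by
    intro z k m hkm h0
    obtain ⟨d, rfl⟩ := Nat.exists_eq_add_of_le hkm
    rw [add_comm, pow_add, Module.End.mul_apply, h0, map_zero]
  -- the set is stable under a
  have hstep : ∀ z : E, (∀ p : ℕ, ∃ n : ℕ, (a ^ n) ((b ^ p) z) = 0) →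
      ∀ p : ℕ, ∃ n : ℕ, (a ^ n) ((b ^ p) (a z)) = 0 := by
    intro z hz p
    obtain ⟨n1, h1⟩ := hz p
    obtain ⟨n2, h2⟩ := hz (p + 1)
    refine ⟨max n1 n2, ?_⟩
    have hbp : (b ^ p) (a z) = a ((b ^ p) z) - p • (b ^ (p + 1)) z := by
      rw [key p z]; abel
    rw [hbp, map_sub, map_nsmul]
    have ha1 : (a ^ max n1 n2) (a ((b ^ p) z)) = (a ^ (max n1 n2 + 1)) ((b ^ p) z) := by
      rw [pow_succ, Module.End.mul_apply]
    rw [ha1, mono _ n1 _ (le_trans (le_max_left n1 n2) (Nat.le_succ _)) h1,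
      mono _ n2 _ (le_max_right n1 n2) h2, smul_zero, sub_zero]
  ext x
  simp only [Set.mem_setOf_eq, Set.mem_singleton_iff]
  constructor
  · intro hx
    by_contra hx0
    -- from p = 0: some power of a kills x
    have h0 : ∃ n : ℕ, (a ^ n) x = 0 := by
      obtain ⟨n, hn⟩ := hx 0
      exact ⟨n, by simpa using hn⟩
    classical
    set n := Nat.find h0 with hndef
    have hn : (a ^ n) x = 0 := Nat.find_spec h0
    have npos : 0 < n := by
      rcases Nat.eq_zero_or_pos n with h | h
      · exfalso; apply hx0; rw [h] at hn; simpa using hn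
      · exact h
    set y := (a ^ (n - 1)) x with hydef
    have hy : y ≠ 0 := Nat.find_min h0 (Nat.sub_lt npos one_pos)
    have hay : a y = 0 := by
      have : a ((a ^ (n - 1)) x) = (a ^ n) x := by
        rw [← Module.End.mul_apply, ← pow_succ', Nat.sub_add_cancel npos]
      rw [hydef, this, hn]
    -- y is still in the set
    have hSy : ∀ p : ℕ, ∃ k : ℕ, (a ^ k) ((b ^ p) y) = 0 := by
      have : ∀ m : ℕ, ∀ p : ℕ, ∃ k : ℕ, (a ^ k) ((b ^ p) ((a ^ m) x)) = 0 := by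
        intro m
        induction m with
        | zero => simpa using hx
        | succ m ih =>
          have h' := hstep _ ih
          intro p
          obtain ⟨k, hk⟩ := h' p
          refine ⟨k, ?_⟩
          have : (a ^ (m + 1)) x = a ((a ^ m) x) := by
            rw [pow_succ', Module.End.mul_apply]
          rw [this]; exact hk
      exact this (n - 1)
    -- the factorial computation
    have fact : ∀ k : ℕ, (a ^ k) (b y) = (Nat.factorial k) • ((b ^ (k + 1)) y) := by
      intro k
      induction k with
      | zero => simp
      | succ k ih =>
        have h1 : (a ^ (k + 1)) (b y) = a ((a ^ k) (b y)) := by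
          rw [pow_succ', Module.End.mul_apply]
        rw [h1, ih, map_nsmul, key (k + 1) y, hay, map_zero, zero_add, smul_smul,
          Nat.factorial_succ]
        ring_nf
    obtain ⟨k, hk⟩ := hSy 1
    rw [pow_one, fact k] at hk
    have hbk : (b ^ (k + 1)) y = 0 := by
      have hcast : ((Nat.factorial k : ℂ)) • ((b ^ (k + 1)) y) = 0 := by
        rw [Nat.cast_smul_eq_nsmul]; exact hk
      have hfne : (Nat.factorial k : ℂ) ≠ 0 := by
        exact_mod_cast Nat.factorial_ne_zero k
      exact (smul_eq_zero.mp hcast).resolve_left hfne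
    apply hy
    have hinj : Function.Injective (b ^ (k + 1) : E →ₗ[ℂ] E) := by
      intro u v huv
      have : (⇑b)^[k + 1] u = (⇑b)^[k + 1] v := by
        rwa [← Module.End.pow_apply, ← Module.End.pow_apply]
      exact hb.iterate (k + 1) this
    apply hinj
    rw [hbk, map_zero]
  · rintro rfl
    intro p
    exact ⟨0, by simp⟩
end

section
/- Let E be a complex vector space and a, b : E → E be ℂ-linear endomorphisms satisfying a∘b − b∘a = b∘b. Then for every N ∈ ℕ with N ≥ 1, one has the identity of endomorphisms N! · b^{2N} = Σ_{j=0}^{N} (−1)^j · (N choose j) · bʲ ∘ a^N ∘ b^{N−j}. -/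
section helpers
variable {A : Type*} [Ring A] {b : A} {c : ℕ → A}

-- step lemma: moving c t past b shifts the index
private lemma helperP2 (hstep : ∀ t, c t * b = b * c (t + 1))
    (hsucc : ∀ t, c (t + 1) = c t + b) (t : ℕ) :
    ∀ m : ℕ, (c t) ^ (m + 1) =
      (c (t+1)) ^ (m + 1) - (m + 1) • (b * (c (t+1)) ^ m) := by
  have hcb : c t = c (t+1) - b := by rw [hsucc]; abel
  have hd : c (t+1) * b = b * c (t+1) + b * b := by
    rw [hsucc, add_mul, hstep, hsucc, mul_add]
  set d := c (t + 1) with hdd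
  intro m
  induction m with
  | zero => simp [hcb]
  | succ m ih =>
    have key : d * (b * d ^ m) = b * d ^ (m + 1) + b * (b * d ^ m) := by
      rw [← mul_assoc, hd, add_mul, mul_assoc, mul_assoc, ← pow_succ']
    calc (c t) ^ (m + 2) = c t * (c t) ^ (m+1) := by rw [pow_succ']
      _ = (d - b) * (d ^ (m+1) - (m+1) • (b * d ^ m)) := by rw [← hcb, ih]
      _ = d * d^(m+1) - (m+1) • (d * (b * d^m)) - (b * d^(m+1) - (m+1) • (b * (b * d^m))) := by
          rw [sub_mul, mul_sub, mul_sub, mul_smul_comm, mul_smul_comm]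
      _ = d ^ (m+2) - (m+2) • (b * d^(m+1)) := by
          rw [key, ← pow_succ', smul_add, succ_nsmul (b * d^(m+1)) (m+1)]
          abel
end helpers

section helpers2
variable {A : Type*} [Ring A] {b : A} {c : ℕ → A}

private lemma helperP3 (hstep : ∀ t, c t * b = b * c (t + 1))
    (hsucc : ∀ t, c (t + 1) = c t + b) (t : ℕ) :
    ∀ m : ℕ, (c t) ^ (m + 1) * b - b * (c t) ^ (m + 1) =
      (m + 1) • (b * b * (c (t+1)) ^ m) := by
  intro m
  induction m generalizing t with
  | zero =>
    rw [pow_one, pow_zero, mul_one, zero_add, one_smul, hstep t, hsucc t, mul_add]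
    abel
  | succ m ih =>
    have ih' : (c t) ^ (m+1) * b = b * (c t) ^ (m+1) + (m+1) • (b * b * (c (t+1)) ^ m) :=
      by rw [← ih t]; abel
    have hcb2 : c t * (b * b) = b * b * c (t + 2) := by
      rw [← mul_assoc, hstep t, mul_assoc, hstep (t+1), ← mul_assoc]
    have hsplit : c (t+2) * (c (t+1)) ^ m = (c (t+1)) ^ (m+1) + b * (c (t+1)) ^ m := by
      rw [hsucc (t+1), add_mul, ← pow_succ']
    have hP2 : b * b * (c t) ^ (m+1) =
        b * b * (c (t+1)) ^ (m+1) - (m+1) • (b * b * (b * (c (t+1)) ^ m)) := by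
      rw [helperP2 hstep hsucc t m, mul_sub, mul_smul_comm]
    calc (c t) ^ (m+2) * b - b * (c t) ^ (m+2)
        = c t * ((c t) ^ (m+1) * b) - b * (c t * (c t) ^ (m+1)) := by
          rw [pow_succ' (c t) (m+1), mul_assoc]
      _ = c t * b * (c t) ^ (m+1) + (m+1) • (c t * (b * b) * (c (t+1)) ^ m)
            - b * (c t * (c t) ^ (m+1)) := by
          rw [ih', mul_add, mul_smul_comm, ← mul_assoc, ← mul_assoc (c t) (b*b)]
      _ = b * (c (t+1) * (c t) ^ (m+1))
            + (m+1) • (b * b * ((c (t+1)) ^ (m+1) + b * (c (t+1)) ^ m))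
            - b * (c t * (c t) ^ (m+1)) := by
          rw [hstep t, hcb2, mul_assoc (b*b), hsplit, mul_assoc b (c (t+1))]
      _ = b * b * (c t) ^ (m+1) + (m+1) • (b * b * (c (t+1)) ^ (m+1))
            + (m+1) • (b * b * (b * (c (t+1)) ^ m)) := by
          rw [hsucc t, add_mul, mul_add, mul_add, smul_add,
            ← mul_assoc b b ((c t)^(m+1))]
          abel
      _ = (m+2) • (b * b * (c (t+1)) ^ (m+1)) := by
          rw [hP2, succ_nsmul (b * b * (c (t+1)) ^ (m+1)) (m+1)]
          abel
end helpers2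

/-- Let `E` be a complex vector space and `a, b : E → E` be `ℂ`-linear
endomorphisms satisfying `a∘b − b∘a = b∘b`. Then for every `N ≥ 1` one has
`N! · b^(2N) = Σ_{j=0}^{N} (−1)^j (N choose j) bʲ ∘ a^N ∘ b^(N−j)`. -/
theorem factorial_smul_b_pow_eq_sum
    (E : Type*) [AddCommGroup E] [Module ℂ E] (a b : E →ₗ[ℂ] E)
    (hcomm : a ∘ₗ b - b ∘ₗ a = b ∘ₗ b)
    (N : ℕ) (hN : 1 ≤ N) :
    (N.factorial : ℂ) • (b ^ (2 * N)) =
      ∑ j ∈ Finset.range (N + 1),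
        ((-1 : ℂ) ^ j * (N.choose j : ℂ)) • ((b ^ j) ∘ₗ (a ^ N) ∘ₗ (b ^ (N - j))) := by
  have hcomm' : a * b - b * a = b * b := hcomm
  set c : ℕ → (E →ₗ[ℂ] E) := fun t => a + t • b with hc
  have hsucc : ∀ t, c (t+1) = c t + b := by
    intro t; simp only [hc, succ_nsmul]; abel
  have hstep : ∀ t, c t * b = b * c (t+1) := by
    intro t
    have hab : a * b = b * a + b * b := by rw [← hcomm']; abel
    simp only [hc]
    rw [add_mul, smul_mul_assoc, mul_add, mul_smul_comm, hab, succ_nsmul]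
    abel
  set L := LinearMap.mulLeft ℂ b with hLdef
  set R := LinearMap.mulRight ℂ b with hRdef
  have hTapp : ∀ x : E →ₗ[ℂ] E, (R - L) x = x * b - b * x := fun x => rfl
  have hP4 : ∀ k, k ≤ N → ((R - L) ^ k) (a ^ N) =
      N.descFactorial k • (b ^ (2*k) * (c k) ^ (N - k)) := by
    intro k
    induction k with
    | zero => intro _; simp [hc]
    | succ k ih =>
      intro hk
      have hk' : k ≤ N := (Nat.lt_of_succ_le hk).le
      obtain ⟨m, hm⟩ : ∃ m, N - k = m + 1 := ⟨N - (k+1), by omega⟩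
      have hm' : N - (k+1) = m := by omega
      have hX : b ^ (2*k) * (c k) ^ (m+1) * b - b * (b ^ (2*k) * (c k) ^ (m+1)) =
          (m+1) • (b ^ (2*(k+1)) * (c (k+1)) ^ m) := by
        calc b ^ (2*k) * (c k) ^ (m+1) * b - b * (b ^ (2*k) * (c k) ^ (m+1))
            = b ^ (2*k) * ((c k) ^ (m+1) * b - b * (c k) ^ (m+1)) := by
              rw [mul_sub, mul_assoc (b ^ (2*k)), ← mul_assoc b, ← pow_succ' b (2*k), pow_succ b (2*k), mul_assoc (b ^ (2*k)) b]
          _ = (m+1) • (b ^ (2*k) * (b * b * (c (k+1)) ^ m)) := by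
              rw [helperP3 hstep hsucc k m, mul_smul_comm]
          _ = (m+1) • (b ^ (2*(k+1)) * (c (k+1)) ^ m) := by
              have h2 : 2*(k+1) = 2*k+1+1 := by ring
              rw [h2, mul_assoc b b, ← mul_assoc (b ^ (2*k)), ← pow_succ, ← mul_assoc,
                ← pow_succ]
      rw [pow_succ', Module.End.mul_apply, ih hk', map_nsmul, hTapp, hm, hm', hX,
        smul_smul, Nat.descFactorial_succ, hm, Nat.mul_comm]
  have hiter : ((R - L) ^ N) (a ^ N) = N.factorial • (b ^ (2*N)) := by
    have h := hP4 N le_rfl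
    simpa [Nat.descFactorial_self, Nat.sub_self] using h
  have hcom : Commute (-L) R := (LinearMap.commute_mulLeft_right (R := ℂ) b b).neg_left
  have hsum : (R - L) ^ N =
      ∑ j ∈ Finset.range (N+1),
        (-L) ^ j * R ^ (N-j) * (N.choose j : Module.End ℂ (E →ₗ[ℂ] E)) := by
    rw [sub_eq_add_neg, add_comm, hcom.add_pow]
  calc (N.factorial : ℂ) • (b ^ (2 * N)) = N.factorial • (b ^ (2*N)) := by
        rw [Nat.cast_smul_eq_nsmul]
    _ = ((R - L) ^ N) (a ^ N) := hiter.symm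
    _ = ∑ j ∈ Finset.range (N+1),
          ((-L) ^ j * R ^ (N-j) * (N.choose j : Module.End ℂ (E →ₗ[ℂ] E))) (a ^ N) := by
        rw [hsum, LinearMap.sum_apply]
    _ = ∑ j ∈ Finset.range (N + 1),
        ((-1 : ℂ) ^ j * (N.choose j : ℂ)) • ((b ^ j) ∘ₗ (a ^ N) ∘ₗ (b ^ (N - j))) := by
        refine Finset.sum_congr rfl fun j _ => ?_
        rw [Module.End.mul_apply, Module.End.mul_apply, Module.End.natCast_apply,
          ← neg_one_smul ℂ L, smul_pow, LinearMap.smul_apply, LinearMap.pow_mulRight,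
          LinearMap.pow_mulLeft, map_nsmul, map_nsmul, LinearMap.mulRight_apply,
          LinearMap.mulLeft_apply, mul_smul, Nat.cast_smul_eq_nsmul,
          Module.End.mul_eq_comp, Module.End.mul_eq_comp]
end

section
/- Let E be a complex vector space and a, b : E → E be ℂ-linear endomorphisms satisfying a∘b − b∘a = b∘b, and set A(E) := {x ∈ E : for every p ∈ ℕ there exists n ∈ ℕ with aⁿ(bᵖ(x)) = 0}. If N ∈ ℕ is such that a^N(x) = 0 for every x ∈ A(E), then b^{2N}(x) = 0 for every x ∈ A(E). -/
variable {E : Type*} [AddCommGroup E] [Module ℂ E]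

/-- The subspace `A(E) = {x ∈ E : ∀ p, ∃ n, aⁿ(bᵖ(x)) = 0}`. -/
def Aset (a b : E →ₗ[ℂ] E) : Submodule ℂ E where
  carrier := {x : E | ∀ p : ℕ, ∃ n : ℕ, (a ^ n) ((b ^ p) x) = 0}
  zero_mem' := fun p => ⟨0, by simp⟩
  add_mem' := by
    intro x y hx hy p
    obtain ⟨n, hn⟩ := hx p
    obtain ⟨m, hm⟩ := hy p
    refine ⟨max n m, ?_⟩
    have hx' : (a ^ max n m) ((b ^ p) x) = 0 := by
      have h : a ^ max n m = a ^ (max n m - n) * a ^ n := by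
        rw [← pow_add]; congr 1; omega
      rw [h, Module.End.mul_apply, hn, map_zero]
    have hy' : (a ^ max n m) ((b ^ p) y) = 0 := by
      have h : a ^ max n m = a ^ (max n m - m) * a ^ m := by
        rw [← pow_add]; congr 1; omega
      rw [h, Module.End.mul_apply, hm, map_zero]
    rw [map_add, map_add, hx', hy', add_zero]
  smul_mem' := by
    intro c x hx p
    obtain ⟨n, hn⟩ := hx p
    exact ⟨n, by rw [map_smul, map_smul, hn, smul_zero]⟩

/-- The subspace `B(E) = {x ∈ E : ∃ m, bᵐ(x) = 0}` (the `b`-torsion of `E`). -/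
def Bset (b : E →ₗ[ℂ] E) : Submodule ℂ E where
  carrier := {x : E | ∃ m : ℕ, (b ^ m) x = 0}
  zero_mem' := ⟨0, by simp⟩
  add_mem' := by
    intro x y hx hy
    obtain ⟨n, hn⟩ := hx
    obtain ⟨m, hm⟩ := hy
    refine ⟨max n m, ?_⟩
    have hx' : (b ^ max n m) x = 0 := by
      have h : b ^ max n m = b ^ (max n m - n) * b ^ n := by
        rw [← pow_add]; congr 1; omega
      rw [h, Module.End.mul_apply, hn, map_zero]
    have hy' : (b ^ max n m) y = 0 := by
      have h : b ^ max n m = b ^ (max n m - m) * b ^ m := by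
        rw [← pow_add]; congr 1; omega
      rw [h, Module.End.mul_apply, hm, map_zero]
    rw [map_add, hx', hy', add_zero]
  smul_mem' := by
    intro c x hx
    obtain ⟨m, hm⟩ := hx
    exact ⟨m, by rw [map_smul, hm, smul_zero]⟩

section AuxDerivation

variable {E : Type*} [AddCommGroup E] [Module ℂ E]

/-- The commutator-with-`b` map `t ↦ t*b - b*t`. -/
def dd (b t : E →ₗ[ℂ] E) : E →ₗ[ℂ] E := t * b - b * t

lemma dd_mul (b s t : E →ₗ[ℂ] E) : dd b (s * t) = dd b s * t + s * dd b t := by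
  unfold dd; noncomm_ring

lemma dd_add (b s t : E →ₗ[ℂ] E) : dd b (s + t) = dd b s + dd b t := by
  unfold dd; noncomm_ring

lemma dd_nsmul (b t : E →ₗ[ℂ] E) (n : ℕ) : dd b (n • t) = n • dd b t := by
  unfold dd
  rw [smul_mul_assoc, mul_smul_comm, smul_sub]

lemma dd_pow (b : E →ₗ[ℂ] E) (k : ℕ) : dd b (b ^ k) = 0 := by
  unfold dd
  rw [← pow_succ, ← pow_succ', sub_self]

lemma dd_iter_mul_left (a b : E →ₗ[ℂ] E) (hab : dd b a = b * b) :
    ∀ (n : ℕ) (t : E →ₗ[ℂ] E),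
      (dd b)^[n + 1] (a * t) =
        a * (dd b)^[n + 1] t + (n + 1) • (b * b * (dd b)^[n] t) := by
  intro n
  induction n with
  | zero =>
    intro t
    simp only [zero_add, Function.iterate_one, Function.iterate_zero, id_eq, dd_mul, hab,
      one_smul]
    noncomm_ring
  | succ n ih =>
    intro t
    have h1 : (dd b)^[n + 1 + 1] (a * t) = dd b ((dd b)^[n + 1] (a * t)) :=
      Function.iterate_succ_apply' _ _ _
    rw [h1, ih t, dd_add, dd_mul, hab, dd_nsmul, dd_mul]
    have hbb : dd b (b * b) = 0 := by
      have := dd_pow b 2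
      rwa [pow_two] at this
    rw [hbb, zero_mul, zero_add]
    have h2 : dd b ((dd b)^[n + 1] t) = (dd b)^[n + 1 + 1] t :=
      (Function.iterate_succ_apply' _ _ _).symm
    have h3 : dd b ((dd b)^[n] t) = (dd b)^[n + 1] t :=
      (Function.iterate_succ_apply' _ _ _).symm
    rw [h2, h3, succ_nsmul (b * b * (dd b)^[n+1] t) (n+1)]
    abel

lemma dd_iter_pow (a b : E →ₗ[ℂ] E) (hab : dd b a = b * b) :
    ∀ m : ℕ, (dd b)^[m] (a ^ m) = (Nat.factorial m) • b ^ (2 * m) := by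
  intro m
  induction m with
  | zero => simp
  | succ m ih =>
    have hpow : a ^ (m + 1) = a * a ^ m := by rw [pow_succ']
    rw [hpow, dd_iter_mul_left a b hab m (a ^ m), ih]
    have hkill : (dd b)^[m + 1] (a ^ m) = 0 := by
      rw [Function.iterate_succ_apply', ih, dd_nsmul, dd_pow, smul_zero]
    rw [hkill, mul_zero, zero_add, mul_smul_comm, smul_smul]
    have : b * b * b ^ (2 * m) = b ^ (2 * (m + 1)) := by
      rw [← pow_two, ← pow_add]
      congr 1
      omega
    rw [this, Nat.factorial_succ]

end AuxDerivation

/-- If `a∘b − b∘a = b∘b` and `a^N` kills `A(E)`, then `b^(2N)` kills `A(E)`. -/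
theorem b_pow_two_mul_eq_zero_on_Aset
    (E : Type*) [AddCommGroup E] [Module ℂ E] (a b : E →ₗ[ℂ] E)
    (hcomm : a ∘ₗ b - b ∘ₗ a = b ∘ₗ b)
    (N : ℕ) (hN : ∀ x ∈ Aset a b, (a ^ N) x = 0) :
    ∀ x ∈ Aset a b, (b ^ (2 * N)) x = 0 := by
  intro x hx
  have hab : dd b a = b * b := by
    unfold dd
    rw [Module.End.mul_eq_comp, Module.End.mul_eq_comp, Module.End.mul_eq_comp]
    exact hcomm
  -- A(E) is stable under b
  have hbA : ∀ y, y ∈ Aset a b → b y ∈ Aset a b := by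
    intro y hy p
    obtain ⟨n, hn⟩ := hy (p + 1)
    refine ⟨n, ?_⟩
    have : (b ^ (p + 1)) y = (b ^ p) (b y) := by
      rw [pow_succ, Module.End.mul_apply]
    rwa [this] at hn
  -- dd preserves the property of killing A(E)
  have key : ∀ (n : ℕ) (t : E →ₗ[ℂ] E), (∀ y ∈ Aset a b, t y = 0) →
      ∀ y ∈ Aset a b, ((dd b)^[n] t) y = 0 := by
    intro n
    induction n with
    | zero => intro t ht y hy; simpa using ht y hy
    | succ n ih =>
      intro t ht y hy
      rw [Function.iterate_succ_apply]
      refine ih (dd b t) ?_ y hy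
      intro z hz
      show (t * b - b * t) z = 0
      rw [LinearMap.sub_apply, Module.End.mul_apply, Module.End.mul_apply,
        ht (b z) (hbA z hz), ht z hz, map_zero, sub_zero]
  have h0 : ((dd b)^[N] (a ^ N)) x = 0 := key N (a ^ N) hN x hx
  rw [dd_iter_pow a b hab N] at h0
  have h1 : (Nat.factorial N) • ((b ^ (2 * N)) x) = 0 := by
    rw [← h0]
    simp
  have h2 : ((Nat.factorial N : ℂ)) • ((b ^ (2 * N)) x) = 0 := by
    rwa [Nat.cast_smul_eq_nsmul]
  rcases smul_eq_zero.mp h2 with h | h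
  · exact absurd h (by exact_mod_cast Nat.factorial_ne_zero N)
  · exact h
end

section
/- If (E, a, b) is a pre-(a,b)-module, then A(E) is a finite-dimensional complex vector space and B(E) = A(E). -/
variable {E : Type*} [AddCommGroup E] [Module ℂ E]

open LinearMap

/-- `a bᵖ − bᵖ a = p • bᵖ⁺¹` in any ring where `ab − ba = b²`. -/
lemma ad_pow_formula {R : Type*} [Ring R] {a b : R} (h : a * b - b * a = b * b) (p : ℕ) :
    a * b ^ p - b ^ p * a = p • b ^ (p + 1) := by
  induction p with
  | zero => simp
  | succ p ih =>
    have e1 : a * b ^ (p + 1) - b ^ (p + 1) * a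
        = (a * b ^ p - b ^ p * a) * b + b ^ p * (a * b - b * a) := by noncomm_ring
    have e2 : b ^ p * (b * b) = b ^ (p + 1 + 1) := by noncomm_ring
    rw [e1, ih, h, smul_mul_assoc, ← pow_succ, e2, succ_nsmul]

/-- If `ab − ba = b²` and `a` is nilpotent in `End K M` (`K` of char zero),
then `b` is nilpotent. -/
lemma nilpotent_of_rel {K M : Type*} [Field K] [CharZero K] [AddCommGroup M] [Module K M]
    {a b : Module.End K M} (h : a * b - b * a = b * b) (hN : IsNilpotent a) :
    IsNilpotent b := by
  have hL : IsNilpotent (LinearMap.mulLeft K a) := by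
    obtain ⟨N, hN⟩ := hN
    exact ⟨N, by rw [LinearMap.pow_mulLeft, hN, LinearMap.mulLeft_zero_eq_zero]⟩
  have hR : IsNilpotent (LinearMap.mulRight K a) := by
    obtain ⟨N, hN⟩ := hN
    exact ⟨N, by rw [LinearMap.pow_mulRight, hN, LinearMap.mulRight_zero_eq_zero]⟩
  obtain ⟨K', hK⟩ := (LinearMap.commute_mulLeft_right a a).isNilpotent_sub hL hR
  have key : ∀ k : ℕ, ((LinearMap.mulLeft K a - LinearMap.mulRight K a) ^ k) b
      = (k : ℕ).factorial • b ^ (k + 1) := by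
    intro k
    induction k with
    | zero => simp
    | succ k ih =>
      rw [pow_succ', Module.End.mul_apply, ih, map_nsmul]
      rw [LinearMap.sub_apply, LinearMap.mulLeft_apply, LinearMap.mulRight_apply,
        ad_pow_formula h (k + 1), smul_smul, Nat.factorial_succ]
      ring_nf
  refine ⟨K' + 1, ?_⟩
  have h0 : (K'.factorial : ℕ) • b ^ (K' + 1) = 0 := by
    rw [← key, hK, LinearMap.zero_apply]
  have : (K'.factorial : K) • b ^ (K' + 1) = 0 := by
    rw [Nat.cast_smul_eq_nsmul]; exact h0
  rcases smul_eq_zero.mp this with h' | h'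
  · exact absurd h' (by exact_mod_cast K'.factorial_ne_zero)
  · exact h'

/-- Extension lemma: if `ker f` and `range f` are finite-dimensional, so is the domain. -/
lemma fd_of_ker_range {K V W : Type*} [Field K] [AddCommGroup V] [Module K V]
    [AddCommGroup W] [Module K W] (f : V →ₗ[K] W)
    (hker : FiniteDimensional K (LinearMap.ker f))
    (hrange : FiniteDimensional K (LinearMap.range f)) :
    FiniteDimensional K V := by
  have h1 : IsNoetherian K (LinearMap.ker f) := IsNoetherian.iff_fg.mpr hker
  have hr : IsNoetherian K (LinearMap.range f) := IsNoetherian.iff_fg.mpr hrange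
  have h2 : IsNoetherian K (V ⧸ LinearMap.ker f) :=
    isNoetherian_of_linearEquiv f.quotKerEquivRange.symm
  have := (isNoetherian_iff_submodule_quotient (LinearMap.ker f)).mpr ⟨h1, h2⟩
  exact IsNoetherian.iff_fg.mp this

/-- If `(E, a, b)` is a pre-(a,b)-module, then `A(E)` is a
finite-dimensional complex vector space and `B(E) = A(E)`. -/
theorem Aset_finiteDimensional_and_Bset_eq_Aset
    (E : Type*) [AddCommGroup E] [Module ℂ E] (a b : E →ₗ[ℂ] E)
    (h1 : a ∘ₗ b - b ∘ₗ a = b ∘ₗ b)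
    (h2 : ∀ c : ℂ, c ≠ 0 → Function.Bijective ⇑(b - c • (LinearMap.id : E →ₗ[ℂ] E)))
    (h3 : ∃ N : ℕ, ∀ x ∈ Aset a b, (a ^ N) x = 0)
    (h4 : Bset b ≤ Aset a b)
    (h5 : (⨅ m : ℕ, LinearMap.range (b ^ m)) ≤ Aset a b)
    (h6ker : FiniteDimensional ℂ (LinearMap.ker b))
    (h6coker : FiniteDimensional ℂ (E ⧸ LinearMap.range b)) :
    FiniteDimensional ℂ (Aset a b) ∧ Bset b = Aset a b := by

  classical
  have h1' : a * b - b * a = b * b := h1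
  have hkill : ∀ (n m : ℕ) (x : E), n ≤ m → (a ^ n) x = 0 → (a ^ m) x = 0 := by
    intro n m x hnm h0
    have : a ^ m = a ^ (m - n) * a ^ n := by rw [← pow_add]; congr 1; omega
    rw [this, Module.End.mul_apply, h0, map_zero]
  have key := ad_pow_formula h1'
  -- `Aset a b` is stable under `b`
  have hAb : ∀ x ∈ Aset a b, b x ∈ Aset a b := by
    intro x hx p
    obtain ⟨n, hn⟩ := hx (p + 1)
    exact ⟨n, by rwa [pow_succ, Module.End.mul_apply] at hn⟩
  -- `Aset a b` is stable under `a`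
  have hAa : ∀ x ∈ Aset a b, a x ∈ Aset a b := by
    intro x hx p
    obtain ⟨n1, hn1⟩ := hx p
    obtain ⟨n2, hn2⟩ := hx (p + 1)
    refine ⟨max n1 n2 + 1, ?_⟩
    have e := LinearMap.ext_iff.mp (key p) x
    simp only [LinearMap.sub_apply, Module.End.mul_apply, LinearMap.smul_apply] at e
    have e2 : (b ^ p) (a x) = a ((b ^ p) x) - p • ((b ^ (p + 1)) x) := by
      rw [← e]; abel
    have t1 : (a ^ (max n1 n2 + 1)) (a ((b ^ p) x)) = 0 := by
      have h' : (a ^ (max n1 n2 + 1)) (a ((b ^ p) x)) = (a ^ (max n1 n2 + 2)) ((b ^ p) x) := by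
        rw [← Module.End.mul_apply, ← pow_succ]
      rw [h']
      exact hkill n1 _ _ (by omega) hn1
    have t2 : (a ^ (max n1 n2 + 1)) ((b ^ (p + 1)) x) = 0 :=
      hkill n2 _ _ (by omega) hn2
    rw [e2, map_sub, map_nsmul, t1, t2, smul_zero, sub_zero]
  -- restrictions to `Aset a b`
  set a' : Module.End ℂ (Aset a b) := a.restrict hAa with ha'def
  set b' : Module.End ℂ (Aset a b) := b.restrict hAb with hb'def
  have rel' : a' * b' - b' * a' = b' * b' := by
    ext x
    have := LinearMap.ext_iff.mp h1 (x : E)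
    simp only [LinearMap.sub_apply, LinearMap.comp_apply] at this
    simp only [ha'def, hb'def, LinearMap.sub_apply, Module.End.mul_apply,
      Submodule.coe_sub, LinearMap.restrict_coe_apply]
    exact this
  obtain ⟨N, hN⟩ := h3
  have ha' : IsNilpotent a' := by
    refine ⟨N, ?_⟩
    ext x
    have hcoe : ((a' ^ N) x : E) = (a ^ N) (x : E) := by
      rw [ha'def, Module.End.pow_restrict]; exact LinearMap.restrict_coe_apply _ _ _
    rw [hcoe, hN (x : E) x.2]
    simp
  obtain ⟨M, hM⟩ := nilpotent_of_rel rel' ha'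
  have hbM : ∀ x ∈ Aset a b, (b ^ M) x = 0 := by
    intro x hx
    have hcoe : ((b' ^ M) ⟨x, hx⟩ : E) = (b ^ M) x := by
      rw [hb'def, Module.End.pow_restrict]; exact LinearMap.restrict_coe_apply _ _ _
    rw [← hcoe, hM]
    simp
  -- kernels of powers of `b` are finite dimensional
  have hker : ∀ m : ℕ, FiniteDimensional ℂ (LinearMap.ker (b ^ m)) := by
    intro m
    induction m with
    | zero =>
      rw [pow_zero, Module.End.one_eq_id, LinearMap.ker_id]
      infer_instance
    | succ m ih =>
      set f : ↥(LinearMap.ker (b ^ (m + 1))) →ₗ[ℂ] E :=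
        b ∘ₗ (LinearMap.ker (b ^ (m + 1))).subtype with hfdef
      apply fd_of_ker_range f
      · -- kernel of `f` embeds into `ker b`
        have hmem : ∀ y : ↥(LinearMap.ker f),
            ((LinearMap.ker f).subtype y : ↥(LinearMap.ker (b ^ (m + 1)))).1 ∈ LinearMap.ker b := by
          intro y
          have := y.2
          simp only [LinearMap.mem_ker, hfdef, LinearMap.comp_apply,
            Submodule.coe_subtype] at this ⊢
          exact this
        set g : ↥(LinearMap.ker f) →ₗ[ℂ] ↥(LinearMap.ker b) :=
          LinearMap.codRestrict (LinearMap.ker b)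
            ((LinearMap.ker (b ^ (m + 1))).subtype.comp (LinearMap.ker f).subtype)
            (fun y => hmem y) with hgdef
        have hginj : Function.Injective g := by
          intro y z hyz
          have h0 := congrArg Subtype.val hyz
          simp only [hgdef, LinearMap.codRestrict_apply, LinearMap.comp_apply,
            Submodule.coe_subtype] at h0
          exact Subtype.ext (Subtype.ext h0)
        exact FiniteDimensional.of_injective g hginj
      · -- range of `f` is contained in `ker (b ^ m)`
        have hle : LinearMap.range f ≤ LinearMap.ker (b ^ m) := by
          rintro y ⟨x, rfl⟩
          have hx := x.2
          simp only [LinearMap.mem_ker] at hx ⊢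
          simp only [hfdef, LinearMap.comp_apply, Submodule.coe_subtype]
          rw [← Module.End.mul_apply, ← pow_succ]
          exact hx
        exact Submodule.finiteDimensional_of_le hle
  haveI := hker M
  have hAle : Aset a b ≤ LinearMap.ker (b ^ M) := fun x hx => LinearMap.mem_ker.mpr (hbM x hx)
  refine ⟨Submodule.finiteDimensional_of_le hAle, le_antisymm h4 ?_⟩
  intro x hx
  exact ⟨M, hbM x hx⟩
end

section
/- Let E be a complex vector space and a, b : E → E be ℂ-linear endomorphisms satisfying conditions (i)–(v) of a pre-(a,b)-module (the finiteness condition (vi) is not assumed). Then E is b-adically separated: ⋂_{m∈ℕ} bᵐ(E) = {0}. -/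
variable {E : Type*} [AddCommGroup E] [Module ℂ E]

section AuxLemmas

variable {V : Type*} [AddCommGroup V] [Module ℂ V]

lemma aux_pow_comm (a b : Module.End ℂ V) (h : a * b - b * a = b * b) :
    ∀ k : ℕ, a * b ^ k = b ^ k * a + k • b ^ (k + 1) := by
  intro k
  induction k with
  | zero => simp
  | succ k ih =>
    have hab : a * b = b * a + b * b := by rw [← h]; abel
    calc a * b ^ (k + 1) = (a * b ^ k) * b := by rw [pow_succ, ← mul_assoc]
      _ = (b ^ k * a + k • b ^ (k + 1)) * b := by rw [ih]
      _ = b ^ k * (a * b) + k • b ^ (k + 2) := by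
          rw [add_mul, smul_mul_assoc, mul_assoc, ← pow_succ]
      _ = b ^ k * (b * a) + b ^ k * (b * b) + k • b ^ (k + 2) := by
          rw [hab, mul_add]
      _ = b ^ (k + 1) * a + (k + 1) • b ^ (k + 2) := by
          have e1 : b ^ k * (b * a) = b ^ (k + 1) * a := by
            rw [← mul_assoc, ← pow_succ]
          have e2 : b ^ k * (b * b) = b ^ (k + 2) := by
            rw [← mul_assoc, ← pow_succ, ← pow_succ]
          rw [e1, e2, succ_nsmul]
          abel

lemma aux_bpow_zero (a b : Module.End ℂ V) (h : a * b - b * a = b * b)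
    (hnil : IsNilpotent a) : ∃ K : ℕ, b ^ K = 0 := by
  have hl : IsNilpotent (LinearMap.mulLeft ℂ a) := by
    rwa [LinearMap.isNilpotent_mulLeft_iff]
  have hr : IsNilpotent (LinearMap.mulRight ℂ a) := by
    rwa [LinearMap.isNilpotent_mulRight_iff]
  have hd : IsNilpotent (LinearMap.mulLeft ℂ a - LinearMap.mulRight ℂ a) :=
    (LinearMap.commute_mulLeft_right a a).isNilpotent_sub hl hr
  obtain ⟨m, hm⟩ := hd
  set d : Module.End ℂ (Module.End ℂ V) :=
    LinearMap.mulLeft ℂ a - LinearMap.mulRight ℂ a with hddef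
  have hd1 : ∀ k : ℕ, d (b ^ k) = k • b ^ (k + 1) := by
    intro k
    have hc := aux_pow_comm a b h k
    simp only [hddef, LinearMap.sub_apply, LinearMap.mulLeft_apply,
      LinearMap.mulRight_apply]
    rw [hc]; abel
  have claim : ∀ n k : ℕ, ∃ c : ℕ, 0 < c ∧ (d ^ n) (b ^ (k + 1)) = c • b ^ (k + 1 + n) := by
    intro n
    induction n with
    | zero => intro k; exact ⟨0 + 1, Nat.succ_pos 0, by simp⟩
    | succ n ih =>
      intro k
      obtain ⟨c, hc, hcn⟩ := ih (k + 1)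
      refine ⟨(k + 1) * c, by positivity, ?_⟩
      rw [pow_succ, Module.End.mul_apply, hd1, map_nsmul, hcn, smul_smul]
      congr 2
      omega
  obtain ⟨c, hc, hcn⟩ := claim m 0
  refine ⟨0 + 1 + m, ?_⟩
  have h0 : (c : ℕ) • b ^ (0 + 1 + m) = 0 := by rw [← hcn, hm]; simp
  have h1 : (c : ℂ) • b ^ (0 + 1 + m) = 0 := by
    rw [Nat.cast_smul_eq_nsmul]; exact h0
  rcases smul_eq_zero.mp h1 with h2 | h2
  · exact absurd h2 (by exact_mod_cast hc.ne')
  · exact h2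

end AuxLemmas

/-- Under conditions (i)–(v) of a pre-(a,b)-module (the finiteness
condition (vi) is not assumed), `E` is `b`-adically separated: `⋂ₘ bᵐ(E) = {0}`. -/
theorem b_adically_separated
    (E : Type*) [AddCommGroup E] [Module ℂ E] (a b : E →ₗ[ℂ] E)
    (h1 : a ∘ₗ b - b ∘ₗ a = b ∘ₗ b)
    (h2 : ∀ c : ℂ, c ≠ 0 → Function.Bijective ⇑(b - c • (LinearMap.id : E →ₗ[ℂ] E)))
    (h3 : ∃ N : ℕ, ∀ x ∈ Aset a b, (a ^ N) x = 0)
    (h4 : Bset b ≤ Aset a b)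
    (h5 : (⨅ m : ℕ, LinearMap.range (b ^ m)) ≤ Aset a b) :
    (⨅ m : ℕ, LinearMap.range (b ^ m)) = (⊥ : Submodule ℂ E) := by
  -- Rewrite hypothesis (i) in terms of ring multiplication in `Module.End`.
  have h1' : a * b - b * a = b * b := h1
  have hcomm := aux_pow_comm a b h1'
  -- monotonicity of killing by powers of `a`
  have hamono : ∀ (z : E) (n n' : ℕ), n ≤ n' → (a ^ n) z = 0 → (a ^ n') z = 0 := by
    intro z n n' hle h0
    have : a ^ n' = a ^ (n' - n) * a ^ n := by rw [← pow_add]; congr 1; omega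
    rw [this, Module.End.mul_apply, h0, map_zero]
  -- `Aset a b` is stable under `b`
  have hbA : ∀ x ∈ Aset a b, b x ∈ Aset a b := by
    intro x hx p
    obtain ⟨n, hn⟩ := hx (p + 1)
    refine ⟨n, ?_⟩
    have e : (b ^ p) (b x) = (b ^ (p + 1)) x := by
      rw [pow_succ, Module.End.mul_apply]
    rw [e]; exact hn
  -- `Aset a b` is stable under `a`
  have haA : ∀ x ∈ Aset a b, a x ∈ Aset a b := by
    intro x hx p
    obtain ⟨n1, hn1⟩ := hx p
    obtain ⟨n2, hn2⟩ := hx (p + 1)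
    refine ⟨max n1 n2, ?_⟩
    have hrel : b ^ p * a = a * b ^ p - p • b ^ (p + 1) := by
      rw [hcomm p]; abel
    have e1 : (b ^ p) (a x) = a ((b ^ p) x) - p • ((b ^ (p + 1)) x) := by
      have := congrArg (fun f : Module.End ℂ E => f x) hrel
      simpa [Module.End.mul_apply, LinearMap.sub_apply] using this
    rw [e1, map_sub, map_nsmul]
    have t1 : (a ^ max n1 n2) (a ((b ^ p) x)) = 0 := by
      rw [← Module.End.mul_apply, ← pow_succ]
      exact hamono _ n1 _ (le_trans (le_max_left n1 n2) (Nat.le_succ _)) hn1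
    have t2 : (a ^ max n1 n2) ((b ^ (p + 1)) x) = 0 :=
      hamono _ n2 _ (le_max_right n1 n2) hn2
    rw [t1, t2, smul_zero, sub_zero]
  -- restrict `a` and `b` to `Aset a b`
  set aA : Module.End ℂ (Aset a b) := a.restrict haA with haAdef
  set bA : Module.End ℂ (Aset a b) := b.restrict hbA with hbAdef
  have hrelA : aA * bA - bA * aA = bA * bA := by
    ext x
    have hp := congrArg (fun f : Module.End ℂ E => f (x : E)) h1'
    simp only [LinearMap.sub_apply, Module.End.mul_apply] at hp
    simp only [haAdef, hbAdef, LinearMap.sub_apply, Module.End.mul_apply,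
      Submodule.coe_sub, LinearMap.restrict_coe_apply]
    exact hp
  obtain ⟨N, hN⟩ := h3
  have hnilA : IsNilpotent aA := by
    refine ⟨N, ?_⟩
    rw [haAdef, Module.End.pow_restrict]
    ext x
    simp only [LinearMap.restrict_coe_apply, LinearMap.zero_apply,
      ZeroMemClass.coe_zero]
    exact hN (x : E) x.2
  obtain ⟨K, hK⟩ := aux_bpow_zero aA bA hrelA hnilA
  -- `b ^ K` kills `Aset a b`
  have hbK : ∀ x ∈ Aset a b, (b ^ K) x = 0 := by
    intro x hx
    have hKr : (b ^ K).restrict (Module.End.pow_apply_mem_of_forall_mem K hbA) = 0 := by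
      rw [← Module.End.pow_restrict K hbA, ← hbAdef, hK]
    have := congrArg (fun f : Module.End ℂ (Aset a b) => ((f ⟨x, hx⟩ : Aset a b) : E)) hKr
    simpa [LinearMap.restrict_coe_apply] using this
  -- finish
  rw [Submodule.eq_bot_iff]
  intro x hx
  have hxA : x ∈ Aset a b := h5 hx
  have hx0 : (b ^ K) x = 0 := hbK x hxA
  obtain ⟨y, hy⟩ := (Submodule.mem_iInf _).mp hx K
  have hyB : y ∈ Bset b := by
    refine ⟨K + K, ?_⟩
    rw [pow_add, Module.End.mul_apply, hy]
    exact hx0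
  have hy0 : (b ^ K) y = 0 := hbK y (h4 hyB)
  rw [← hy, hy0]
end

section
/- If (E, a, b) is a pre-(a,b)-module, then b induces an injective endomorphism of the quotient E/A(E); that is, for every x ∈ E, if b(x) ∈ A(E) then x ∈ A(E). -/
variable {E : Type*} [AddCommGroup E] [Module ℂ E]

section Aux

variable (a b : E →ₗ[ℂ] E)

lemma aux_kill_mono {n m : ℕ} {y : E} (h : (a ^ n) y = 0) (hnm : n ≤ m) :
    (a ^ m) y = 0 := by
  have h' : a ^ m = a ^ (m - n) * a ^ n := by rw [← pow_add]; congr 1; omega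
  rw [h', Module.End.mul_apply, h, map_zero]

lemma aux_comm2 (hab : a * b = b * a + b * b) (n : ℕ) :
    a ^ n * b = b * (a + b) ^ n := by
  induction n with
  | zero => simp
  | succ n ih =>
    rw [pow_succ', mul_assoc, ih, ← mul_assoc, hab, pow_succ']
    noncomm_ring

lemma aux_comm1 (hab : a * b = b * a + b * b) (n : ℕ) :
    b * a ^ n = (a - b) ^ n * b := by
  induction n with
  | zero => simp
  | succ n ih =>
    rw [pow_succ, ← mul_assoc, ih, mul_assoc, pow_succ, mul_assoc]
    congr 1
    rw [sub_mul, hab]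
    noncomm_ring

lemma aux_comm3 (hab : a * b = b * a + b * b) (p : ℕ) :
    a * b ^ p = b ^ p * a + (p : ℂ) • b ^ (p + 1) := by
  induction p with
  | zero => simp
  | succ p ih =>
    rw [pow_succ, ← mul_assoc, ih, add_mul, mul_assoc, hab, smul_mul_assoc, ← pow_succ]
    have e : b ^ p * (b * b) = b ^ (p + 1 + 1) := by rw [← mul_assoc, ← pow_succ, ← pow_succ]
    rw [mul_add, e, ← mul_assoc]
    push_cast
    rw [add_smul, one_smul]
    abel

lemma Aset_b_stable {x : E} (hx : x ∈ Aset a b) : b x ∈ Aset a b := by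
  intro p
  obtain ⟨n, hn⟩ := hx (p + 1)
  exact ⟨n, by rw [show (b ^ p) (b x) = (b ^ (p + 1)) x by rw [pow_succ, Module.End.mul_apply], hn]⟩

lemma Aset_a_stable (hab : a * b = b * a + b * b) {x : E} (hx : x ∈ Aset a b) :
    a x ∈ Aset a b := by
  intro p
  obtain ⟨n₁, hn₁⟩ := hx p
  obtain ⟨n₂, hn₂⟩ := hx (p + 1)
  refine ⟨max (n₁ + 1) n₂, ?_⟩
  have key : (b ^ p) (a x) = a ((b ^ p) x) - (p : ℂ) • (b ^ (p + 1)) x := by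
    have := congrArg (fun f : E →ₗ[ℂ] E => f x) (aux_comm3 a b hab p)
    simp only [Module.End.mul_apply, LinearMap.add_apply, LinearMap.smul_apply] at this
    rw [eq_sub_iff_add_eq, ← this]
  rw [key, map_sub, map_smul]
  have h1' : (a ^ max (n₁ + 1) n₂) (a ((b ^ p) x)) = 0 := by
    have : (a ^ (n₁ + 1)) (a ((b ^ p) x)) = 0 := by
      rw [show (a ^ (n₁ + 1)) (a ((b ^ p) x)) = (a ^ (n₁ + 1 + 1)) ((b ^ p) x) by
        rw [pow_succ (n := n₁ + 1), Module.End.mul_apply]]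
      exact aux_kill_mono a hn₁ (by omega)
    exact aux_kill_mono a this (le_max_left _ _)
  have h2' : (a ^ max (n₁ + 1) n₂) ((b ^ (p + 1)) x) = 0 :=
    aux_kill_mono a hn₂ (le_max_right _ _)
  rw [h1', h2', smul_zero, sub_zero]

lemma Aset_amb_stable (hab : a * b = b * a + b * b) {x : E} (hx : x ∈ Aset a b) (n : ℕ) :
    ((a - b) ^ n) x ∈ Aset a b := by
  induction n with
  | zero => simpa using hx
  | succ n ih =>
    rw [pow_succ', Module.End.mul_apply, LinearMap.sub_apply]
    exact sub_mem (Aset_a_stable a b hab ih) (Aset_b_stable a b ih)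

lemma aux_diff_mem (hab : a * b = b * a + b * b) {x : E} (hbx : b x ∈ Aset a b) (n : ℕ) :
    ((a + b) ^ n) x - (a ^ n) x ∈ Aset a b := by
  induction n with
  | zero => simpa using zero_mem (Aset a b)
  | succ n ih =>
    have e1 : ((a + b) ^ (n + 1)) x = a (((a + b) ^ n) x) + b (((a + b) ^ n) x) := by
      rw [pow_succ', Module.End.mul_apply, LinearMap.add_apply]
    have e2 : (a ^ (n + 1)) x = a ((a ^ n) x) := by
      rw [pow_succ', Module.End.mul_apply]
    have e3 : b ((a ^ n) x) = ((a - b) ^ n) (b x) := by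
      have := congrArg (fun f : E →ₗ[ℂ] E => f x) (aux_comm1 a b hab n)
      simpa using this
    have : ((a + b) ^ (n + 1)) x - (a ^ (n + 1)) x =
        a (((a + b) ^ n) x - (a ^ n) x) + b (((a + b) ^ n) x - (a ^ n) x)
          + ((a - b) ^ n) (b x) := by
      rw [e1, e2, map_sub, map_sub, ← e3]; abel
    rw [this]
    exact add_mem (add_mem (Aset_a_stable a b hab ih) (Aset_b_stable a b ih))
      (Aset_amb_stable a b hab hbx n)

end Aux

/-- If `(E, a, b)` is a pre-(a,b)-module, then `b` induces an injective
endomorphism of `E/A(E)`: for every `x ∈ E`, if `b(x) ∈ A(E)` then `x ∈ A(E)`. -/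
theorem b_injective_mod_Aset
    (E : Type*) [AddCommGroup E] [Module ℂ E] (a b : E →ₗ[ℂ] E)
    (h1 : a ∘ₗ b - b ∘ₗ a = b ∘ₗ b)
    (h2 : ∀ c : ℂ, c ≠ 0 → Function.Bijective ⇑(b - c • (LinearMap.id : E →ₗ[ℂ] E)))
    (h3 : ∃ N : ℕ, ∀ x ∈ Aset a b, (a ^ N) x = 0)
    (h4 : Bset b ≤ Aset a b)
    (h5 : (⨅ m : ℕ, LinearMap.range (b ^ m)) ≤ Aset a b)
    (h6ker : FiniteDimensional ℂ (LinearMap.ker b))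
    (h6coker : FiniteDimensional ℂ (E ⧸ LinearMap.range b)) :
    ∀ x : E, b x ∈ Aset a b → x ∈ Aset a b := by
  have hab : a * b = b * a + b * b := by
    simp only [Module.End.mul_eq_comp]
    rw [← h1]
    abel
  intro x hbx p
  match p with
  | p + 1 =>
    obtain ⟨n, hn⟩ := hbx p
    exact ⟨n, by rw [show (b ^ (p + 1)) x = (b ^ p) (b x) by
      rw [pow_succ, Module.End.mul_apply], hn]⟩
  | 0 =>
    obtain ⟨N, hN⟩ := h3
    -- a^N (b x) = 0 since b x ∈ A
    have hNbx : (a ^ N) (b x) = 0 := hN _ hbx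
    -- (a+b)^N x ∈ ker b
    have hker : b (((a + b) ^ N) x) = 0 := by
      have := congrArg (fun f : E →ₗ[ℂ] E => f x) (aux_comm2 a b hab N)
      simp only [Module.End.mul_apply] at this
      rw [← this, hNbx]
    have hmemA : ((a + b) ^ N) x ∈ Aset a b := h4 ⟨1, by simpa using hker⟩
    have hd : ((a + b) ^ N) x - (a ^ N) x ∈ Aset a b := aux_diff_mem a b hab hbx N
    refine ⟨N + N, ?_⟩
    simp only [pow_zero, Module.End.one_apply]
    have : (a ^ (N + N)) x = (a ^ N) ((a ^ N) x) := by
      rw [pow_add, Module.End.mul_apply]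
    rw [this, show (a ^ N) x = ((a + b) ^ N) x - (((a + b) ^ N) x - (a ^ N) x) by abel,
      map_sub, hN _ hmemA, hN _ hd, sub_zero]
end

section
/- If (E, a, b) is a pre-(a,b)-module, then the quotient E/A(E) is b-adically separated; equivalently, ⋂_{m∈ℕ} (A(E) + bᵐ(E)) = A(E). In particular the kernel of the natural map from E to the b-adic completion of E/A(E) is exactly A(E). -/
variable {E : Type*} [AddCommGroup E] [Module ℂ E]

/-- If `(E, a, b)` is a pre-(a,b)-module, then `E/A(E)` is `b`-adically
separated; equivalently, `⋂ₘ (A(E) + bᵐ(E)) = A(E)`.  (This says exactly that the kernel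
of the natural map from `E` to the `b`-adic completion of `E/A(E)` is `A(E)`.) -/
theorem quotient_b_adically_separated
    (E : Type*) [AddCommGroup E] [Module ℂ E] (a b : E →ₗ[ℂ] E)
    (h1 : a ∘ₗ b - b ∘ₗ a = b ∘ₗ b)
    (h2 : ∀ c : ℂ, c ≠ 0 → Function.Bijective ⇑(b - c • (LinearMap.id : E →ₗ[ℂ] E)))
    (h3 : ∃ N : ℕ, ∀ x ∈ Aset a b, (a ^ N) x = 0)
    (h4 : Bset b ≤ Aset a b)
    (h5 : (⨅ m : ℕ, LinearMap.range (b ^ m)) ≤ Aset a b)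
    (h6ker : FiniteDimensional ℂ (LinearMap.ker b))
    (h6coker : FiniteDimensional ℂ (E ⧸ LinearMap.range b)) :
    (⨅ m : ℕ, (Aset a b ⊔ LinearMap.range (b ^ m))) = Aset a b := by
  have hcomm : a * b - b * a = b * b := h1
  have hab : a * b = b * a + b * b := sub_eq_iff_eq_add'.mp hcomm
  -- a * b^m = b^m * (a + m • b)
  have key : ∀ m : ℕ, a * b ^ m = b ^ m * (a + m • b) := by
    intro m
    induction m with
    | zero => simp
    | succ m ih =>
      have : a * b ^ (m+1) = b ^ m * (a + m • b) * b := by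
        rw [pow_succ, ← mul_assoc, ih]
      rw [this]
      have step : (a + m • b) * b = b * (a + (m+1) • b) := by
        rw [add_mul, hab, smul_mul_assoc, mul_add, mul_smul_comm, succ_nsmul]
        abel
      rw [mul_assoc, step, ← mul_assoc, ← pow_succ]
  have keyN : ∀ N m : ℕ, a ^ N * b ^ m = b ^ m * (a + m • b) ^ N := by
    intro N m
    induction N with
    | zero => simp
    | succ N ih =>
      rw [pow_succ, pow_succ, mul_assoc, key, ← mul_assoc, ih, mul_assoc]
  have hbA : ∀ x ∈ Aset a b, b x ∈ Aset a b := by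
    intro x hx p
    obtain ⟨n, hn⟩ := hx (p + 1)
    refine ⟨n, ?_⟩
    have : (b ^ p) (b x) = (b ^ (p+1)) x := by
      rw [pow_succ, Module.End.mul_apply]
    rw [this, hn]
  have hbpA : ∀ p : ℕ, ∀ x ∈ Aset a b, (b ^ p) x ∈ Aset a b := by
    intro p
    induction p with
    | zero => intro x hx; simpa using hx
    | succ p ih =>
      intro x hx
      have : (b ^ (p+1)) x = (b ^ p) (b x) := by
        conv_lhs => rw [pow_succ', Module.End.mul_apply]
        rw [← Module.End.mul_apply, ← Module.End.mul_apply, ← pow_succ, ← pow_succ']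
      rw [this]
      exact ih _ (hbA x hx)
  obtain ⟨N, hN⟩ := h3
  apply le_antisymm
  · intro x hx
    rw [Submodule.mem_iInf] at hx
    -- every b^p x is in every A ⊔ range (b^m)
    have hz : ∀ p m : ℕ, (b ^ p) x ∈ Aset a b ⊔ LinearMap.range (b ^ m) := by
      intro p m
      obtain ⟨α, hα, w, hw, hxw⟩ := Submodule.mem_sup.mp (hx m)
      obtain ⟨y, rfl⟩ := hw
      refine Submodule.mem_sup.mpr ⟨(b ^ p) α, hbpA p α hα, (b ^ m) ((b ^ p) y),
        ⟨(b ^ p) y, rfl⟩, ?_⟩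
      have : (b ^ m) ((b ^ p) y) = (b ^ p) ((b ^ m) y) := by
        rw [← Module.End.mul_apply, ← Module.End.mul_apply, ← pow_add, ← pow_add,
          Nat.add_comm]
      rw [this, ← map_add, hxw]
    -- a^N (b^p x) lies in the intersection of ranges, hence in A
    intro p
    refine ⟨N + N, ?_⟩
    have hmem : (a ^ N) ((b ^ p) x) ∈ Aset a b := by
      apply h5
      rw [Submodule.mem_iInf]
      intro m
      obtain ⟨α, hα, w, hw, hxw⟩ := Submodule.mem_sup.mp (hz p m)
      obtain ⟨y, rfl⟩ := hw
      have hα0 : (a ^ N) α = 0 := hN α hα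
      have : (a ^ N) ((b ^ p) x) = (b ^ m) (((a + m • b) ^ N) y) := by
        rw [← hxw, map_add, hα0, zero_add, ← Module.End.mul_apply, keyN,
          Module.End.mul_apply]
      rw [this]
      exact ⟨_, rfl⟩
    have := hN _ hmem
    rw [pow_add, Module.End.mul_apply]
    exact this
  · exact le_iInf fun m => le_sup_left
end

section
/- Let (E, a, b) be a pre-(a,b)-module and set δ := dim_ℂ ker(b). Then the quotient E/(A(E) + b(E)) is finite-dimensional over ℂ and dim_ℂ E/(A(E) + b(E)) + δ = dim_ℂ E/b(E). (The left-hand dimension is the rank of the (a,b)-module associated to E.) -/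
open LinearMap Module Finset

variable {E : Type*} [AddCommGroup E] [Module ℂ E]

section auxPreAB
variable {E : Type*} [AddCommGroup E] [Module ℂ E]

lemma vand_extract {V : Type*} [AddCommGroup V] [Module ℂ V] (n : ℕ) (v : Fin (n+1) → V)
    (h : ∀ p : Fin (n+1), ∑ k : Fin (n+1), ((p : ℕ) : ℂ) ^ (k : ℕ) • v k = 0) : ∀ j, v j = 0 := by
  intro j
  set M : Matrix (Fin (n+1)) (Fin (n+1)) ℂ :=
    Matrix.vandermonde (fun i : Fin (n+1) => ((i : ℕ) : ℂ)) with hMdef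
  have hdet : IsUnit M.det := by
    refine (Matrix.det_vandermonde_ne_zero_iff.mpr ?_).isUnit
    intro i j hij
    exact Fin.ext (Nat.cast_injective hij)
  have hinv : M⁻¹ * M = 1 := Matrix.nonsing_inv_mul M hdet
  have key : ∀ p, ∑ k, M p k • v k = 0 := by
    intro p
    simpa [hMdef, Matrix.vandermonde] using h p
  calc v j = ∑ k, (1 : Matrix (Fin (n+1)) (Fin (n+1)) ℂ) j k • v k := by
        simp [Matrix.one_apply]
    _ = ∑ k, (M⁻¹ * M) j k • v k := by rw [hinv]
    _ = ∑ k, (∑ p, M⁻¹ j p * M p k) • v k := by simp [Matrix.mul_apply]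
    _ = ∑ k, ∑ p, M⁻¹ j p • M p k • v k := by
        simp [Finset.sum_smul, mul_smul]
    _ = ∑ p, M⁻¹ j p • ∑ k, M p k • v k := by
        rw [Finset.sum_comm]; simp [Finset.smul_sum]
    _ = 0 := by simp [key]

lemma comm_pow (a b : E →ₗ[ℂ] E) (h1 : a ∘ₗ b - b ∘ₗ a = b ∘ₗ b) (n p : ℕ) :
    a ^ n * b ^ p = b ^ p * (a + (p : ℂ) • b) ^ n := by
  have hab : a * b = b * a + b * b := by
    have := h1
    rw [sub_eq_iff_eq_add] at this
    simpa [Module.End.mul_eq_comp, add_comm] using this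
  have key : ∀ p : ℕ, a * b ^ p = b ^ p * (a + (p : ℂ) • b) := by
    intro p
    induction p with
    | zero => simp
    | succ p ih =>
      have e1 : a * b ^ (p+1) = (a * b ^ p) * b := by
        rw [mul_assoc, ← pow_succ]
      have e2 : (a + (p : ℂ) • b) * b = b * (a + ((p:ℕ)+1 : ℂ) • b) := by
        rw [add_mul, mul_add, smul_mul_assoc, mul_smul_comm, hab, add_smul, one_smul]
        abel
      rw [e1, ih, mul_assoc, e2, ← mul_assoc, ← pow_succ, pow_succ]
      push_cast
      rw [mul_assoc]
  induction n with
  | zero => simp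
  | succ n ih =>
    rw [pow_succ', mul_assoc, ih, ← mul_assoc, key, mul_assoc, ← pow_succ']

lemma expand_pow (a b : E →ₗ[ℂ] E) (n : ℕ) :
    ∃ S : ℕ → (E →ₗ[ℂ] E), S 0 = a ^ n ∧ S n = b ^ n ∧ (∀ k, n < k → S k = 0) ∧
      ∀ c : ℂ, (a + c • b) ^ n = ∑ k ∈ Finset.range (n+1), c ^ k • S k := by
  induction n with
  | zero =>
    exact ⟨fun k => if k = 0 then 1 else 0, by simp, by simp,
      fun k hk => by simp only []; rw [if_neg (by omega : ¬ k = 0)], fun c => by simp⟩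
  | succ n ih =>
    obtain ⟨S, hS0, hSn, hStop, hSsum⟩ := ih
    refine ⟨fun k => a * S k + b * (if k = 0 then 0 else S (k-1)), ?_, ?_, ?_, ?_⟩
    · simp [hS0, pow_succ']
    · simp [hSn, hStop (n+1) (Nat.lt_succ_self n), pow_succ']
    · intro k hk
      have h1k : S k = 0 := hStop k (by omega)
      have h2k : S (k-1) = 0 := hStop (k-1) (by omega)
      simp [h1k, h2k]
    · intro c
      have hL : (a + c • b) ^ (n+1)
          = (∑ k ∈ Finset.range (n+1), c ^ k • (a * S k))
            + ∑ k ∈ Finset.range (n+1), c ^ (k+1) • (b * S k) := by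
        rw [pow_succ', hSsum c, add_mul, Finset.mul_sum, Finset.mul_sum]
        congr 1
        · exact Finset.sum_congr rfl fun k _ => by rw [mul_smul_comm]
        · refine Finset.sum_congr rfl fun k _ => ?_
          rw [smul_mul_assoc, mul_smul_comm, smul_smul, ← pow_succ']
      rw [hL]
      rw [Finset.sum_range_succ' (fun k => c ^ k • (a * S k + b * (if k = 0 then 0 else S (k-1)))) (n+1)]
      simp only [Nat.succ_ne_zero, if_false, if_pos, Nat.add_sub_cancel, pow_zero, one_smul,
        mul_zero, add_zero, smul_add]
      rw [Finset.sum_add_distrib]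
      have hA : ∑ k ∈ Finset.range (n+1), c ^ k • (a * S k)
          = (∑ i ∈ Finset.range (n+1), c ^ (i+1) • (a * S (i+1))) + a * S 0 := by
        rw [Finset.sum_range_succ (fun i => c ^ (i+1) • (a * S (i+1))) n, hStop (n+1) (by omega),
          Finset.sum_range_succ' (fun k => c ^ k • (a * S k)) n]
        simp
      rw [hA]
      abel

lemma Aset_bpow_mem (a b : E →ₗ[ℂ] E) {x : E} (hx : x ∈ Aset a b) (p : ℕ) :
    (b ^ p) x ∈ Aset a b := by
  intro q
  obtain ⟨n, hn⟩ := hx (q + p)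
  have e : (b ^ q) ((b ^ p) x) = (b ^ (q + p)) x := by
    rw [pow_add, Module.End.mul_apply]
  exact ⟨n, by rw [e]; exact hn⟩

lemma ker_pow_le_Aset (a b : E →ₗ[ℂ] E) (h4 : Bset b ≤ Aset a b) (m : ℕ) :
    LinearMap.ker (b ^ m) ≤ Aset a b := fun x hx => h4 ⟨m, hx⟩

lemma Aset_eq_ker (a b : E →ₗ[ℂ] E) (h1 : a ∘ₗ b - b ∘ₗ a = b ∘ₗ b)
    (h4 : Bset b ≤ Aset a b) (N : ℕ) (h3N : ∀ x ∈ Aset a b, (a ^ N) x = 0) :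
    Aset a b = LinearMap.ker (b ^ (2 * N)) := by
  refine le_antisymm ?_ (ker_pow_le_Aset a b h4 _)
  intro x hx
  obtain ⟨S, hS0, hSN, hStop, hSsum⟩ := expand_pow a b N
  set W := LinearMap.ker (b ^ N : E →ₗ[ℂ] E) with hW
  have key : ∀ p : ℕ, p ≤ N → ((a + (p : ℂ) • b) ^ N) x ∈ W := by
    intro p hp
    have hp1 : (b ^ p) (((a + (p : ℂ) • b) ^ N) x) = 0 := by
      rw [← Module.End.mul_apply, ← comm_pow a b h1 N p, Module.End.mul_apply]
      exact h3N _ (Aset_bpow_mem a b hx p)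
    have hsplit : (b ^ N : E →ₗ[ℂ] E) = b ^ (N - p) * b ^ p := by
      rw [← pow_add]; congr 1; omega
    rw [hW, LinearMap.mem_ker, hsplit, Module.End.mul_apply, hp1, map_zero]
  have hv := vand_extract N (fun k : Fin (N+1) => W.mkQ (S (k : ℕ) x)) ?_
  · have hlast := hv (Fin.last N)
    simp only [Fin.val_last] at hlast
    rw [hSN] at hlast
    have hmem : (b ^ N) x ∈ W := by
      rwa [Submodule.mkQ_apply, Submodule.Quotient.mk_eq_zero] at hlast
    rw [LinearMap.mem_ker] at hmem ⊢
    have : (b ^ (2 * N) : E →ₗ[ℂ] E) = b ^ N * b ^ N := by rw [← pow_add]; congr 1; omega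
    rw [this, Module.End.mul_apply, hmem]
  · intro p
    have hsum : ∑ k : Fin (N+1), ((p : ℕ) : ℂ) ^ (k : ℕ) • W.mkQ (S (k : ℕ) x)
        = W.mkQ (((a + ((p : ℕ) : ℂ) • b) ^ N) x) := by
      rw [← Finset.sum_range (fun k => ((p : ℕ) : ℂ) ^ k • W.mkQ (S k x))]
      rw [hSsum ((p : ℕ) : ℂ)]
      rw [LinearMap.sum_apply, map_sum]
      refine Finset.sum_congr rfl fun k _ => ?_
      rw [LinearMap.smul_apply, map_smul]
    rw [hsum, Submodule.mkQ_apply, Submodule.Quotient.mk_eq_zero]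
    exact key (p : ℕ) p.is_le

lemma fd_ker_pow (b : E →ₗ[ℂ] E) (h6ker : FiniteDimensional ℂ (LinearMap.ker b)) (m : ℕ) :
    FiniteDimensional ℂ (LinearMap.ker (b ^ m)) := by
  induction m with
  | zero =>
    have h : LinearMap.ker ((b : E →ₗ[ℂ] E) ^ 0) = ⊥ := by
      rw [pow_zero, Module.End.one_eq_id, LinearMap.ker_id]
    rw [h]; infer_instance
  | succ m ih =>
    rw [← Submodule.fg_iff_finiteDimensional]
    apply Submodule.fg_of_fg_map_of_fg_inf_ker (b ^ m)
    · have hle : Submodule.map (b ^ m) (LinearMap.ker (b ^ (m+1))) ≤ LinearMap.ker b := by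
        rintro _ ⟨y, hy, rfl⟩
        simp only [LinearMap.mem_ker] at hy ⊢
        rw [← Module.End.mul_apply, ← pow_succ']
        exact hy
      haveI := h6ker
      haveI := Submodule.finiteDimensional_of_le hle
      exact (Submodule.fg_iff_finiteDimensional _).mpr inferInstance
    · have heq : LinearMap.ker (b ^ (m+1)) ⊓ LinearMap.ker (b ^ m) = LinearMap.ker (b ^ m) := by
        refine inf_eq_right.mpr fun x hx => ?_
        rw [LinearMap.mem_ker] at hx ⊢
        rw [pow_succ', Module.End.mul_apply, hx, map_zero]
      rw [heq]
      exact (Submodule.fg_iff_finiteDimensional _).mpr ih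

lemma quot_count (a b : E →ₗ[ℂ] E)
    (h1 : a ∘ₗ b - b ∘ₗ a = b ∘ₗ b)
    (K : Submodule ℂ E)
    (hKfd : FiniteDimensional ℂ K)
    (hkerb_le : LinearMap.ker b ≤ K)
    (hmapK : Submodule.map b K = K ⊓ LinearMap.range b)
    (h6coker : FiniteDimensional ℂ (E ⧸ LinearMap.range b))
    (δ : ℕ) (hδ : δ = Module.finrank ℂ (LinearMap.ker b)) :
    FiniteDimensional ℂ (E ⧸ (K ⊔ LinearMap.range b)) ∧
    Module.finrank ℂ (E ⧸ (K ⊔ LinearMap.range b)) + δ =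
      Module.finrank ℂ (E ⧸ LinearMap.range b) := by
  set R := LinearMap.range b with hR
  set T := K ⊔ R with hT
  -- rank-nullity for b restricted to K
  have e1 : finrank ℂ (Submodule.map b K) + δ = finrank ℂ K := by
    have hrange : LinearMap.range (b ∘ₗ K.subtype) = Submodule.map b K := by
      rw [LinearMap.range_comp, Submodule.range_subtype]
    have hker : LinearMap.ker (b ∘ₗ K.subtype) = Submodule.comap K.subtype (LinearMap.ker b) := by
      rw [LinearMap.ker_comp]
    have hkerrank : finrank ℂ (LinearMap.ker (b ∘ₗ K.subtype)) = δ := by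
      rw [hker, hδ]
      exact LinearEquiv.finrank_eq (Submodule.comapSubtypeEquivOfLe hkerb_le)
    have := LinearMap.finrank_range_add_finrank_ker (b ∘ₗ K.subtype)
    rw [hrange, hkerrank] at this
    exact this
  -- rank-nullity for mkQ restricted to K
  have e2 : finrank ℂ (Submodule.map R.mkQ K) + finrank ℂ (Submodule.map b K) = finrank ℂ K := by
    have hrange : LinearMap.range (R.mkQ ∘ₗ K.subtype) = Submodule.map R.mkQ K := by
      rw [LinearMap.range_comp, Submodule.range_subtype]
    have hker : LinearMap.ker (R.mkQ ∘ₗ K.subtype) = Submodule.comap K.subtype (K ⊓ R) := by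
      rw [LinearMap.ker_comp, Submodule.ker_mkQ]
      ext x
      simp only [Submodule.mem_comap, Submodule.mem_inf]
      exact ⟨fun h => ⟨x.2, h⟩, fun h => h.2⟩
    have hkerrank : finrank ℂ (LinearMap.ker (R.mkQ ∘ₗ K.subtype))
        = finrank ℂ (Submodule.map b K) := by
      rw [hker, hmapK]
      exact LinearEquiv.finrank_eq (Submodule.comapSubtypeEquivOfLe inf_le_left)
    have := LinearMap.finrank_range_add_finrank_ker (R.mkQ ∘ₗ K.subtype)
    rw [hrange, hkerrank] at this
    exact this
  have e3 : finrank ℂ (Submodule.map R.mkQ K) = δ := by omega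
  have hTmap : Submodule.map R.mkQ T = Submodule.map R.mkQ K := by
    rw [hT, Submodule.map_sup, Submodule.mkQ_map_self, sup_bot_eq]
  have equiv := Submodule.quotientQuotientEquivQuotient R T le_sup_right
  haveI hfdq : FiniteDimensional ℂ ((E ⧸ R) ⧸ Submodule.map R.mkQ T) := inferInstance
  haveI hfdT : FiniteDimensional ℂ (E ⧸ T) := Module.Finite.equiv equiv
  refine ⟨hfdT, ?_⟩
  have e4 : finrank ℂ (E ⧸ T) = finrank ℂ ((E ⧸ R) ⧸ Submodule.map R.mkQ T) :=
    (LinearEquiv.finrank_eq equiv).symm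
  have e5 := Submodule.finrank_quotient_add_finrank (Submodule.map R.mkQ T)
  rw [hTmap, e3] at e5
  rw [e4, hTmap]
  exact e5

end auxPreAB

/-- Let `(E, a, b)` be a pre-(a,b)-module and `δ := dim_ℂ ker b`.
Then `E/(A(E) + b(E))` is finite dimensional over `ℂ` and
`dim_ℂ E/(A(E) + b(E)) + δ = dim_ℂ E/b(E)` (the left-hand dimension being the rank of the
(a,b)-module associated to `E`). -/
theorem rank_add_delta_eq_dim_coker
    (E : Type*) [AddCommGroup E] [Module ℂ E] (a b : E →ₗ[ℂ] E)
    (h1 : a ∘ₗ b - b ∘ₗ a = b ∘ₗ b)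
    (h2 : ∀ c : ℂ, c ≠ 0 → Function.Bijective ⇑(b - c • (LinearMap.id : E →ₗ[ℂ] E)))
    (h3 : ∃ N : ℕ, ∀ x ∈ Aset a b, (a ^ N) x = 0)
    (h4 : Bset b ≤ Aset a b)
    (h5 : (⨅ m : ℕ, LinearMap.range (b ^ m)) ≤ Aset a b)
    (h6ker : FiniteDimensional ℂ (LinearMap.ker b))
    (h6coker : FiniteDimensional ℂ (E ⧸ LinearMap.range b))
    (δ : ℕ) (hδ : δ = Module.finrank ℂ (LinearMap.ker b)) :
    FiniteDimensional ℂ (E ⧸ (Aset a b ⊔ LinearMap.range b)) ∧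
    Module.finrank ℂ (E ⧸ (Aset a b ⊔ LinearMap.range b)) + δ =
      Module.finrank ℂ (E ⧸ LinearMap.range b) := by
  obtain ⟨N, h3N⟩ := h3
  have hAK : Aset a b = LinearMap.ker (b ^ (2 * N)) := Aset_eq_ker a b h1 h4 N h3N
  haveI hKfd : FiniteDimensional ℂ (Aset a b) := by
    rw [hAK]; exact fd_ker_pow b h6ker _
  have hkerb_le : LinearMap.ker b ≤ Aset a b := by
    intro x hx
    rw [LinearMap.mem_ker] at hx
    exact h4 ⟨1, by simpa using hx⟩
  have hmapK : Submodule.map b (Aset a b) = Aset a b ⊓ LinearMap.range b := by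
    apply le_antisymm
    · rintro _ ⟨y, hy, rfl⟩
      refine ⟨?_, ⟨y, rfl⟩⟩
      have := Aset_bpow_mem a b hy 1
      simpa using this
    · rintro x ⟨hxK, y, rfl⟩
      refine ⟨y, ?_, rfl⟩
      have hxk' : (b ^ (2 * N)) (b y) = 0 := by
        rw [hAK] at hxK; exact hxK
      have hz : (b ^ (2 * N + 1)) y = 0 := by
        rw [pow_succ, Module.End.mul_apply]
        exact hxk'
      exact h4 ⟨2 * N + 1, hz⟩
  exact quot_count a b h1 (Aset a b) hKfd hkerb_le hmapK h6coker δ hδ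
end

section
/- (Twisted recurrence.) Let k ≥ 1 and let p₁, …, p_k be integers with p_j ≥ 2 for all j. For each j ∈ [1,k] let φ_j : {0, 1, …, p_j − 1} → [0,1] ⊆ ℝ be a strictly increasing function with φ_j(p_j − 1) = 1. Let A(σ₁, …, σ_k) be a family of propositions indexed by integers σ_j ∈ {0, …, p_j − 1}. Assume: (1) A(0, …, 0) holds; (2) for every index (σ₁, …, σ_k) and every j ∈ [1,k] such that σ_j ≤ p_j − 2 and φ_j(σ_j) = min_{l ∈ [1,k]} φ_l(σ_l), the implication A(σ₁, …, σ_k) ⟹ A(σ₁, …, σ_j + 1, …, σ_k) holds. Then A(p₁ − 1, …, p_k − 1) holds. -/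
/-- **Twisted recurrence.** Let `k ≥ 1`, let `p₁, …, p_k ≥ 2` be integers,
and for each `j` let `φ_j : {0,…,p_j−1} → [0,1]` be strictly increasing with
`φ_j(p_j−1) = 1`.  Let `A(σ₁,…,σ_k)` be propositions indexed by `σ_j ∈ {0,…,p_j−1}`.
If `A(0,…,0)` holds, and whenever `σ_j ≤ p_j − 2` and `φ_j(σ_j) = min_l φ_l(σ_l)` the
implication `A(σ) ⟹ A(σ₁,…,σ_j+1,…,σ_k)` holds, then `A(p₁−1,…,p_k−1)` holds. -/
theorem twisted_recurrence
    (k : ℕ) (hk : 1 ≤ k) (p : Fin k → ℕ) (hp : ∀ j, 2 ≤ p j)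
    (φ : Fin k → ℕ → ℝ)
    (hmono : ∀ j, ∀ x y : ℕ, x < y → y ≤ p j - 1 → φ j x < φ j y)
    (hrange : ∀ j, ∀ x : ℕ, x ≤ p j - 1 → φ j x ∈ Set.Icc (0 : ℝ) 1)
    (htop : ∀ j, φ j (p j - 1) = 1)
    (A : (Fin k → ℕ) → Prop)
    (h0 : A fun _ => 0)
    (hstep : ∀ σ : Fin k → ℕ, (∀ l, σ l ≤ p l - 1) → ∀ j : Fin k, σ j ≤ p j - 2 →
      (∀ l, φ j (σ j) ≤ φ l (σ l)) → A σ → A (Function.update σ j (σ j + 1))) :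
    A fun j => p j - 1 := by
  have hne : (Finset.univ : Finset (Fin k)).Nonempty := by
    have : Nonempty (Fin k) := ⟨⟨0, hk⟩⟩
    exact Finset.univ_nonempty
  have key : ∀ n : ℕ, ∀ σ : Fin k → ℕ, (∀ l, σ l ≤ p l - 1) →
      (∑ l, (p l - 1 - σ l)) = n → A σ → A (fun j => p j - 1) := by
    intro n
    induction n with
    | zero =>
      intro σ hσ hsum hA
      have heq : ∀ l, σ l = p l - 1 := by
        intro l
        have := Finset.sum_eq_zero_iff.mp hsum l (Finset.mem_univ l)
        have := hσ l
        omega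
      have : σ = fun j => p j - 1 := funext heq
      rwa [this] at hA
    | succ n ih =>
      intro σ hσ hsum hA
      obtain ⟨j, -, hjmin⟩ := Finset.exists_min_image Finset.univ (fun l => φ l (σ l)) hne
      have hjmin' : ∀ l, φ j (σ j) ≤ φ l (σ l) := fun l => hjmin l (Finset.mem_univ l)
      have hj : σ j ≤ p j - 2 := by
        by_contra h
        have hjeq : σ j = p j - 1 := by have := hσ j; have := hp j; omega
        have hall : ∀ l, σ l = p l - 1 := by
          intro l
          by_contra hl
          have hlt : σ l < p l - 1 := by have := hσ l; omega
          have h1 : φ l (σ l) < φ l (p l - 1) := hmono l _ _ hlt le_rfl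
          rw [htop l] at h1
          have h2 := hjmin' l
          rw [hjeq, htop j] at h2
          linarith
        have hz : (∑ l, (p l - 1 - σ l)) = 0 := by
          apply Finset.sum_eq_zero; intro l _; have := hall l; omega
        omega
      have hA' := hstep σ hσ j hj hjmin' hA
      set τ := Function.update σ j (σ j + 1) with hτ
      have hτj : τ j = σ j + 1 := Function.update_self j _ σ
      have hτl : ∀ l, l ≠ j → τ l = σ l := fun l hl => Function.update_of_ne hl _ σ
      apply ih τ
      · intro l
        rcases eq_or_ne l j with rfl | hlj
        · rw [hτj]; have := hp l; omega
        · rw [hτl l hlj]; exact hσ l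
      · have d1 : (∑ l, (p l - 1 - σ l))
            = (p j - 1 - σ j) + ∑ l ∈ Finset.univ.erase j, (p l - 1 - σ l) :=
          (Finset.add_sum_erase _ _ (Finset.mem_univ j)).symm
        have d2 : (∑ l, (p l - 1 - τ l))
            = (p j - 1 - τ j) + ∑ l ∈ Finset.univ.erase j, (p l - 1 - τ l) :=
          (Finset.add_sum_erase _ _ (Finset.mem_univ j)).symm
        have deq : ∑ l ∈ Finset.univ.erase j, (p l - 1 - τ l)
            = ∑ l ∈ Finset.univ.erase j, (p l - 1 - σ l) := by
          apply Finset.sum_congr rfl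
          intro l hl
          rw [hτl l (Finset.ne_of_mem_erase hl)]
        rw [d2, deq, hτj]
        rw [d1] at hsum
        have := hp j
        omega
      · exact hA'
  exact key _ (fun _ => 0) (fun l => by show (0:ℕ) ≤ p l - 1; omega) rfl h0
end
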